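/- Let Ω = [a₁,b₁]×[a₂,b₂] ⊂ ℝ² be a closed rectangle with a₁<b₁, a₂<b₂, let γ>1 and Δt ∈ ℝ. Let pⁿ, pⁿ⁺¹, ρⁿ, kⁿ, hⁿ : Ω → ℝ be continuous, ρⁿ⁺¹ : Ω → ℝ continuous and everywhere positive, wⁿ⁺¹, wⁿ, w*, qⁿ : Ω → ℝ² and τ*u* : Ω → ℝ² continuous, and suppose the three vector fields hⁿ∇pⁿ⁺¹, hⁿw*, and kⁿwⁿ + qⁿ − τ*u* are continuous on Ω and differentiable on its interior with continuous (integrable) divergences. Assume the pointwise semi-discrete pressure equation holds on Ω: pⁿ⁺¹/(γ−1) − Δt² div(hⁿ∇pⁿ⁺¹) = pⁿ/(γ−1) + p* − |wⁿ⁺¹|²/(2ρⁿ⁺¹) − Δt div(hⁿw*), where p* = ρⁿkⁿ − Δt div(kⁿwⁿ + qⁿ − τ*u*). Assume moreover the impermeability conditions: the normal components of hⁿ∇pⁿ⁺¹, hⁿw*, and kⁿwⁿ + qⁿ − τ*u* all vanish on the boundary ∂Ω. Then the total energy is globally conserved: ∫_Ω ( pⁿ⁺¹/(γ−1) + |wⁿ⁺¹|²/(2ρⁿ⁺¹)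 ) dV = ∫_Ω ( pⁿ/(γ−1) + ρⁿkⁿ ) dV. -/

import Mathlib

/-- Divergence of a planar vector field, computed from the Fréchet derivatives of
its two components. -/
noncomputable def pdiv (F : ℝ × ℝ → ℝ × ℝ) (x : ℝ × ℝ) : ℝ :=
  fderiv ℝ (fun y => (F y).1) x (1, 0) + fderiv ℝ (fun y => (F y).2) x (0, 1)

/-- Gradient of a planar scalar field. -/
noncomputable def pgrad (f : ℝ × ℝ → ℝ) (x : ℝ × ℝ) : ℝ × ℝ :=
  (fderiv ℝ f x (1, 0), fderiv ℝ f x (0, 1))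

/-!
Integrating the pressure equation over `Ω` turns it into the energy balance plus the integrals
of the three divergences `div(hⁿ∇pⁿ⁺¹)`, `div(hⁿw*)` and `div(kⁿwⁿ + qⁿ − τ*u*)`. By the
divergence theorem on the rectangle each of these equals the flux of its field through `∂Ω`,
which vanishes because the normal components vanish on the sides.
-/

open MeasureTheory Set

theorem integral_add_eq_of_integral_eq_zero {α E : Type*} [MeasurableSpace α] {μ : Measure α}
    [NormedAddCommGroup E] [NormedSpace ℝ E] {f g : α → E} (hg : Integrable g μ)
    (hg₀ : ∫ x, g x ∂μ = 0) : ∫ x, f x + g x ∂μ = ∫ x, f x ∂μ := by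
  by_cases hf : Integrable f μ
  · rw [integral_add hf hg, hg₀, add_zero]
  · -- neither `f` nor `f + g` is integrable, so both integrals are `0`
    rw [integral_undef hf, integral_undef]
    exact fun hfg => hf ((integrable_add_iff_integrable_left' hg).1 hfg)

theorem intervalIntegral_eq_zero_of_eqOn_zero {E : Type*} [NormedAddCommGroup E]
    [NormedSpace ℝ E] {f : ℝ → E} {a b : ℝ} (hf : EqOn f 0 (uIcc a b)) :
    ∫ x in a..b, f x = 0 := by
  rw [intervalIntegral.integral_congr hf]
  exact intervalIntegral.integral_zero

theorem integral_pdiv_Icc_eq_zero {a b : ℝ × ℝ} (hab : a ≤ b) {F : ℝ × ℝ → ℝ × ℝ}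
    (hFc : ContinuousOn F (Icc a b))
    (hFd : ∀ x ∈ interior (Icc a b), DifferentiableAt ℝ F x)
    (hFi : IntegrableOn (pdiv F) (Icc a b))
    (hF₁ : ∀ x ∈ Icc a b, (x.1 = a.1 ∨ x.1 = b.1) → (F x).1 = 0)
    (hF₂ : ∀ x ∈ Icc a b, (x.2 = a.2 ∨ x.2 = b.2) → (F x).2 = 0) :
    ∫ x in Icc a b, pdiv F x = 0 := by
  have hint : interior (Icc a b) = Ioo a.1 b.1 ×ˢ Ioo a.2 b.2 := by
    rw [Icc_prod_eq, interior_prod_eq, interior_Icc, interior_Icc]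
  have hFd' (x) (hx : x ∈ Ioo a.1 b.1 ×ˢ Ioo a.2 b.2 \ ∅) : DifferentiableAt ℝ F x :=
    hFd x (hint ▸ hx.1)
  have hdiv := integral_divergence_prod_Icc_of_hasFDerivAt_off_countable_of_le
    (fun y => (F y).1) (fun y => (F y).2) (fun x => fderiv ℝ (fun y => (F y).1) x)
    (fun x => fderiv ℝ (fun y => (F y).2) x) a b hab ∅ countable_empty hFc.fst hFc.snd
    (fun x hx => (hFd' x hx).fst.hasFDerivAt) (fun x hx => (hFd' x hx).snd.hasFDerivAt) hFi
  have top : ∫ x in a.1..b.1, (F (x, b.2)).2 = 0 := intervalIntegral_eq_zero_of_eqOn_zero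
    fun x hx => by
      rw [uIcc_of_le hab.1] at hx
      exact hF₂ _ ⟨⟨hx.1, hab.2⟩, ⟨hx.2, le_rfl⟩⟩ (Or.inr rfl)
  have bottom : ∫ x in a.1..b.1, (F (x, a.2)).2 = 0 := intervalIntegral_eq_zero_of_eqOn_zero
    fun x hx => by
      rw [uIcc_of_le hab.1] at hx
      exact hF₂ _ ⟨⟨hx.1, le_rfl⟩, ⟨hx.2, hab.2⟩⟩ (Or.inl rfl)
  have right : ∫ y in a.2..b.2, (F (b.1, y)).1 = 0 := intervalIntegral_eq_zero_of_eqOn_zero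
    fun y hy => by
      rw [uIcc_of_le hab.2] at hy
      exact hF₁ _ ⟨⟨hab.1, hy.1⟩, ⟨le_rfl, hy.2⟩⟩ (Or.inr rfl)
  have left : ∫ y in a.2..b.2, (F (a.1, y)).1 = 0 := intervalIntegral_eq_zero_of_eqOn_zero
    fun y hy => by
      rw [uIcc_of_le hab.2] at hy
      exact hF₁ _ ⟨⟨le_rfl, hy.1⟩, ⟨hab.1, hy.2⟩⟩ (Or.inl rfl)
  rw [top, bottom, right, left, sub_zero, add_zero, sub_zero] at hdiv
  exact hdiv

theorem global_energy_conservation_general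
    (a₁ b₁ a₂ b₂ : ℝ) (ha : a₁ < b₁) (hb : a₂ < b₂)
    (Ω : Set (ℝ × ℝ)) (hΩ : Ω = Set.Icc (a₁, a₂) (b₁, b₂))
    (γ Δt : ℝ)
    (pn pn1 ρn kn ρn1 : ℝ × ℝ → ℝ)
    (wn1 : ℝ × ℝ → ℝ × ℝ)
    -- the three flux fields
    (A B Cf : ℝ × ℝ → ℝ × ℝ)
    -- continuity on Ω, differentiability on the interior, continuous integrable divergences
    (hAc : ContinuousOn A Ω) (hBc : ContinuousOn B Ω) (hCc : ContinuousOn Cf Ω)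
    (hAd : ∀ x ∈ interior Ω, DifferentiableAt ℝ A x)
    (hBd : ∀ x ∈ interior Ω, DifferentiableAt ℝ B x)
    (hCd : ∀ x ∈ interior Ω, DifferentiableAt ℝ Cf x)
    (hAdiv : IntegrableOn (pdiv A) Ω)
    (hBdiv : IntegrableOn (pdiv B) Ω)
    (hCdiv : IntegrableOn (pdiv Cf) Ω)
    -- the pointwise semi-discrete pressure equation, with
    -- p* = ρⁿkⁿ − Δt div(kⁿwⁿ + qⁿ − τ*u*)
    (heq : ∀ x ∈ Ω,
      pn1 x / (γ - 1) - Δt ^ 2 * pdiv A x =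
        pn x / (γ - 1) + (ρn x * kn x - Δt * pdiv Cf x)
          - ((wn1 x).1 ^ 2 + (wn1 x).2 ^ 2) / (2 * ρn1 x)
          - Δt * pdiv B x)
    -- impermeability: vanishing normal components on the boundary of the rectangle
    (hAbc1 : ∀ x ∈ Ω, (x.1 = a₁ ∨ x.1 = b₁) → (A x).1 = 0)
    (hAbc2 : ∀ x ∈ Ω, (x.2 = a₂ ∨ x.2 = b₂) → (A x).2 = 0)
    (hBbc1 : ∀ x ∈ Ω, (x.1 = a₁ ∨ x.1 = b₁) → (B x).1 = 0)
    (hBbc2 : ∀ x ∈ Ω, (x.2 = a₂ ∨ x.2 = b₂) → (B x).2 = 0)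
    (hCbc1 : ∀ x ∈ Ω, (x.1 = a₁ ∨ x.1 = b₁) → (Cf x).1 = 0)
    (hCbc2 : ∀ x ∈ Ω, (x.2 = a₂ ∨ x.2 = b₂) → (Cf x).2 = 0) :
    ∫ x in Ω, (pn1 x / (γ - 1) + ((wn1 x).1 ^ 2 + (wn1 x).2 ^ 2) / (2 * ρn1 x)) =
      ∫ x in Ω, (pn x / (γ - 1) + ρn x * kn x) := by
  subst hΩ
  have hab : ((a₁, a₂) : ℝ × ℝ) ≤ (b₁, b₂) := ⟨ha.le, hb.le⟩
  have hA₀ := integral_pdiv_Icc_eq_zero hab hAc hAd hAdiv hAbc1 hAbc2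
  have hB₀ := integral_pdiv_Icc_eq_zero hab hBc hBd hBdiv hBbc1 hBbc2
  have hC₀ := integral_pdiv_Icc_eq_zero hab hCc hCd hCdiv hCbc1 hCbc2
  have hflux : IntegrableOn
      (fun x => Δt ^ 2 * pdiv A x - Δt * pdiv Cf x - Δt * pdiv B x) (Icc (a₁, a₂) (b₁, b₂)) :=
    ((hAdiv.const_mul _).sub (hCdiv.const_mul _)).sub (hBdiv.const_mul _)
  have hflux₀ : ∫ x in Icc (a₁, a₂) (b₁, b₂),
      (Δt ^ 2 * pdiv A x - Δt * pdiv Cf x - Δt * pdiv B x) = 0 := by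
    rw [integral_sub (f := fun x => Δt ^ 2 * pdiv A x - Δt * pdiv Cf x)
        ((hAdiv.const_mul _).sub (hCdiv.const_mul _)) (hBdiv.const_mul _),
      integral_sub (f := fun x => Δt ^ 2 * pdiv A x) (hAdiv.const_mul _) (hCdiv.const_mul _),
      integral_const_mul,
      integral_const_mul, integral_const_mul, hA₀, hB₀, hC₀]
    ring
  calc _ = ∫ x in Icc (a₁, a₂) (b₁, b₂), ((pn x / (γ - 1) + ρn x * kn x) +
          (Δt ^ 2 * pdiv A x - Δt * pdiv Cf x - Δt * pdiv B x)) :=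
        setIntegral_congr_fun measurableSet_Icc fun x hx => by linarith [heq x hx]
    _ = _ := integral_add_eq_of_integral_eq_zero hflux hflux₀

/-- Global conservation of the total energy for the semi-implicit scheme: if the
semi-discrete pressure equation holds pointwise on the closed rectangle `Ω` and the
normal components of the flux fields `hⁿ∇pⁿ⁺¹`, `hⁿw*`, `kⁿwⁿ + qⁿ − τ*u*` vanish
on `∂Ω`, then `∫_Ω (pⁿ⁺¹/(γ−1) + |wⁿ⁺¹|²/(2ρⁿ⁺¹)) = ∫_Ω (pⁿ/(γ−1) + ρⁿkⁿ)`. -/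
theorem global_energy_conservation
    (a₁ b₁ a₂ b₂ : ℝ) (ha : a₁ < b₁) (hb : a₂ < b₂)
    (Ω : Set (ℝ × ℝ)) (hΩ : Ω = Set.Icc (a₁, a₂) (b₁, b₂))
    (γ Δt : ℝ) (hγ : 1 < γ)
    (pn pn1 ρn kn hn ρn1 : ℝ × ℝ → ℝ)
    (wn1 wn wstar qn τu : ℝ × ℝ → ℝ × ℝ)
    -- continuity of the scalar fields
    (hpn : ContinuousOn pn Ω) (hpn1 : ContinuousOn pn1 Ω)
    (hρn : ContinuousOn ρn Ω) (hkn : ContinuousOn kn Ω) (hhn : ContinuousOn hn Ω)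
    (hρn1 : ContinuousOn ρn1 Ω) (hρn1pos : ∀ x ∈ Ω, 0 < ρn1 x)
    -- continuity of the vector fields
    (hwn1 : ContinuousOn wn1 Ω) (hwn : ContinuousOn wn Ω)
    (hwstar : ContinuousOn wstar Ω) (hqn : ContinuousOn qn Ω)
    (hτu : ContinuousOn τu Ω)
    -- the three flux fields
    (A B Cf : ℝ × ℝ → ℝ × ℝ)
    (hA : A = fun x => hn x • pgrad pn1 x)
    (hB : B = fun x => hn x • wstar x)
    (hC : Cf = fun x => kn x • wn x + qn x - τu x)
    -- continuity on Ω, differentiability on the interior, continuous integrable divergences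
    (hAc : ContinuousOn A Ω) (hBc : ContinuousOn B Ω) (hCc : ContinuousOn Cf Ω)
    (hAd : ∀ x ∈ interior Ω, DifferentiableAt ℝ A x)
    (hBd : ∀ x ∈ interior Ω, DifferentiableAt ℝ B x)
    (hCd : ∀ x ∈ interior Ω, DifferentiableAt ℝ Cf x)
    (hAdivc : ContinuousOn (pdiv A) (interior Ω))
    (hBdivc : ContinuousOn (pdiv B) (interior Ω))
    (hCdivc : ContinuousOn (pdiv Cf) (interior Ω))
    (hAdiv : IntegrableOn (pdiv A) Ω)
    (hBdiv : IntegrableOn (pdiv B) Ω)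
    (hCdiv : IntegrableOn (pdiv Cf) Ω)
    -- the pointwise semi-discrete pressure equation, with
    -- p* = ρⁿkⁿ − Δt div(kⁿwⁿ + qⁿ − τ*u*)
    (heq : ∀ x ∈ Ω,
      pn1 x / (γ - 1) - Δt ^ 2 * pdiv A x =
        pn x / (γ - 1) + (ρn x * kn x - Δt * pdiv Cf x)
          - ((wn1 x).1 ^ 2 + (wn1 x).2 ^ 2) / (2 * ρn1 x)
          - Δt * pdiv B x)
    -- impermeability: vanishing normal components on the boundary of the rectangle
    (hAbc1 : ∀ x ∈ Ω, (x.1 = a₁ ∨ x.1 = b₁) → (A x).1 = 0)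
    (hAbc2 : ∀ x ∈ Ω, (x.2 = a₂ ∨ x.2 = b₂) → (A x).2 = 0)
    (hBbc1 : ∀ x ∈ Ω, (x.1 = a₁ ∨ x.1 = b₁) → (B x).1 = 0)
    (hBbc2 : ∀ x ∈ Ω, (x.2 = a₂ ∨ x.2 = b₂) → (B x).2 = 0)
    (hCbc1 : ∀ x ∈ Ω, (x.1 = a₁ ∨ x.1 = b₁) → (Cf x).1 = 0)
    (hCbc2 : ∀ x ∈ Ω, (x.2 = a₂ ∨ x.2 = b₂) → (Cf x).2 = 0) :
    ∫ x in Ω, (pn1 x / (γ - 1) + ((wn1 x).1 ^ 2 + (wn1 x).2 ^ 2) / (2 * ρn1 x)) =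
      ∫ x in Ω, (pn x / (γ - 1) + ρn x * kn x) :=
  global_energy_conservation_general a₁ b₁ a₂ b₂ ha hb Ω hΩ γ Δt pn pn1 ρn kn ρn1 wn1 A B Cf hAc hBc
    hCc hAd hBd hCd hAdiv hBdiv hCdiv heq hAbc1 hAbc2 hBbc1 hBbc2 hCbc1 hCbc2
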